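/- arXiv:1712.01456 — 2 statements merged into one kernel-verified Lean document; each statement's English description precedes it below -/
import Mathlib

section
/- Let μ be a fixed probability measure on a compact metric space X, and let θ ↦ ν_θ be a family of probability measures such that ν_θ is the pushforward of a fixed measure p under a map g_θ that is continuous in θ (for each z, θ ↦ g_θ(z) is continuous). Then θ ↦ W₁(μ, ν_θ) is continuous. -/
open MeasureTheory

/-- Wasserstein-1 distance as infimum of transport cost over couplings. -/
noncomputable def W1 {X : Type*} [MetricSpace X] [MeasurableSpace X]
    (μ ν : Measure X) : ℝ :=
  sInf {c | ∃ π : Measure (X × X),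
    π.map Prod.fst = μ ∧ π.map Prod.snd = ν ∧ c = ∫ q, dist q.1 q.2 ∂π}

open ProbabilityTheory Filter

section Aux

lemma integrable_of_abs_bound {α : Type*} [MeasurableSpace α] (m : Measure α)
    [IsFiniteMeasure m] {h : α → ℝ} (hm : AEStronglyMeasurable h m) (D : ℝ)
    (hb : ∀ a, |h a| ≤ D) : Integrable h m :=
  (integrable_const D).mono' hm
    (Filter.Eventually.of_forall (by simpa [Real.norm_eq_abs] using hb))

lemma map_compProd_comap {Z X Y : Type*} [MeasurableSpace Z] [MeasurableSpace X]
    [MeasurableSpace Y] (p : Measure Z) [SFinite p] {f : Z → X} (hf : Measurable f)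
    [SFinite (p.map f)] (κ : Kernel X Y) [IsSFiniteKernel κ] :
    (p ⊗ₘ (κ.comap f hf)).map (fun q : Z × Y => (f q.1, q.2)) = (p.map f) ⊗ₘ κ := by
  have hbig : Measurable (fun q : Z × Y => (f q.1, q.2)) :=
    (hf.comp measurable_fst).prodMk measurable_snd
  ext s hs
  rw [Measure.map_apply hbig hs, Measure.compProd_apply (hs.preimage hbig),
    Measure.compProd_apply hs, lintegral_map (Kernel.measurable_kernel_prodMk_left hs) hf]
  refine lintegral_congr fun z => ?_
  rw [Kernel.comap_apply]
  rfl

variable {Z X : Type*} [MeasurableSpace Z] [MetricSpace X] [CompactSpace X]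
  [MeasurableSpace X] [BorelSpace X]

/-- Key transport bound: `W1 μ (p.map f) ≤ W1 μ (p.map f₀) + ∫ dist (f₀ z) (f z) dp`. -/
lemma W1_le_of_pushforward (μ : Measure X) [IsProbabilityMeasure μ]
    (p : Measure Z) [IsProbabilityMeasure p]
    (f₀ f : Z → X) (hf₀ : Measurable f₀) (hf : Measurable f) :
    W1 μ (p.map f) ≤ W1 μ (p.map f₀) + ∫ z, dist (f₀ z) (f z) ∂p := by
  have hne : Nonempty X := by
    rcases isEmpty_or_nonempty X with h | h
    · have h0 : μ Set.univ = 1 := measure_univ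
      rw [Set.univ_eq_empty_iff.mpr h] at h0
      simp at h0
    · exact h
  haveI : StandardBorelSpace X := inferInstance
  obtain ⟨D, hD⟩ : ∃ D, ∀ x y : X, dist x y ≤ D := by
    obtain ⟨C, hC⟩ := Metric.isBounded_iff.mp (isCompact_univ (X := X)).isBounded
    exact ⟨C, fun x y => hC (Set.mem_univ x) (Set.mem_univ y)⟩
  haveI : IsProbabilityMeasure (p.map f₀) := Measure.isProbabilityMeasure_map hf₀.aemeasurable
  haveI : IsProbabilityMeasure (p.map f) := Measure.isProbabilityMeasure_map hf.aemeasurable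
  set C := ∫ z, dist (f₀ z) (f z) ∂p with hCdef
  set S₀ := {c | ∃ π : Measure (X × X),
    π.map Prod.fst = μ ∧ π.map Prod.snd = p.map f₀ ∧ c = ∫ q, dist q.1 q.2 ∂π} with hS₀
  have hS₀ne : S₀.Nonempty := by
    refine ⟨∫ q, dist q.1 q.2 ∂(μ.prod (p.map f₀)), μ.prod (p.map f₀), ?_, ?_, rfl⟩
    · simp [Measure.map_fst_prod]
    · simp [Measure.map_snd_prod]
  have hbdd : BddBelow {c | ∃ π : Measure (X × X),
      π.map Prod.fst = μ ∧ π.map Prod.snd = p.map f ∧ c = ∫ q, dist q.1 q.2 ∂π} := by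
    refine ⟨0, fun c hc => ?_⟩
    obtain ⟨π, _, _, rfl⟩ := hc
    exact integral_nonneg fun q => dist_nonneg
  have key : ∀ c ∈ S₀, W1 μ (p.map f) ≤ c + C := by
    rintro c ⟨π, h1, h2, rfl⟩
    haveI : IsProbabilityMeasure π := ⟨by
      have hu : π.map Prod.fst Set.univ = 1 := by rw [h1]; exact measure_univ
      rwa [Measure.map_apply measurable_fst MeasurableSet.univ, Set.preimage_univ] at hu⟩
    set σ : Measure (X × X) := π.map Prod.swap with hσ
    haveI : IsProbabilityMeasure σ := Measure.isProbabilityMeasure_map measurable_swap.aemeasurable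
    have hσfst : σ.fst = p.map f₀ := by
      rw [hσ, Measure.fst, Measure.map_map measurable_fst measurable_swap]
      exact h2
    have hσsnd : σ.snd = μ := by
      rw [hσ, Measure.snd, Measure.map_map measurable_snd measurable_swap]
      exact h1
    set κ := σ.condKernel with hκ
    have hdis : (p.map f₀) ⊗ₘ κ = σ := by rw [← hσfst]; exact σ.disintegrate κ
    set η := κ.comap f₀ hf₀ with hη
    set τ : Measure (Z × X) := p ⊗ₘ η with hτ
    haveI : IsProbabilityMeasure τ := by rw [hτ]; infer_instance
    have hbig : Measurable (fun q : Z × X => (f₀ q.1, q.2)) :=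
      (hf₀.comp measurable_fst).prodMk measurable_snd
    have hmap : τ.map (fun q : Z × X => (f₀ q.1, q.2)) = σ := by
      rw [hτ, hη, map_compProd_comap p hf₀ κ, hdis]
    set m : Z × X → X × X := fun q => (q.2, f q.1) with hm
    have hmmeas : Measurable m := measurable_snd.prodMk (hf.comp measurable_fst)
    set ρ : Measure (X × X) := τ.map m with hρ
    -- marginals of ρ
    have hρ1 : ρ.map Prod.fst = μ := by
      rw [hρ, Measure.map_map measurable_fst hmmeas]
      have : (Prod.fst ∘ m) = (Prod.snd : Z × X → X) := rfl
      rw [this, ← hσsnd, ← hmap, Measure.snd, Measure.map_map measurable_snd hbig]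
      rfl
    have hρ2 : ρ.map Prod.snd = p.map f := by
      rw [hρ, Measure.map_map measurable_snd hmmeas]
      have : (Prod.snd ∘ m) = (f ∘ Prod.fst) := rfl
      rw [this, ← Measure.map_map hf measurable_fst]
      congr 1
      have : τ.map Prod.fst = τ.fst := rfl
      rw [this, hτ, Measure.fst_compProd]
    -- cost of ρ
    have hcost1 : ∫ q, dist q.1 q.2 ∂ρ = ∫ q : Z × X, dist q.2 (f q.1) ∂τ := by
      rw [hρ, integral_map hmmeas.aemeasurable]
      exact ((Measurable.dist measurable_fst measurable_snd)).aestronglyMeasurable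
    have hint1 : Integrable (fun q : Z × X => dist q.2 (f₀ q.1)) τ :=
      integrable_of_abs_bound τ
        ((measurable_snd.dist (hf₀.comp measurable_fst)).aestronglyMeasurable) D
        (fun q => by rw [abs_of_nonneg dist_nonneg]; exact hD _ _)
    have hint2 : Integrable (fun q : Z × X => dist (f₀ q.1) (f q.1)) τ :=
      integrable_of_abs_bound τ
        (((hf₀.comp measurable_fst).dist (hf.comp measurable_fst)).aestronglyMeasurable) D
        (fun q => by rw [abs_of_nonneg dist_nonneg]; exact hD _ _)
    have hintm : Integrable (fun q : Z × X => dist q.2 (f q.1)) τ :=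
      integrable_of_abs_bound τ
        ((measurable_snd.dist (hf.comp measurable_fst)).aestronglyMeasurable) D
        (fun q => by rw [abs_of_nonneg dist_nonneg]; exact hD _ _)
    have hcost2 : ∫ q : Z × X, dist q.2 (f q.1) ∂τ ≤
        (∫ q : Z × X, dist q.2 (f₀ q.1) ∂τ) + ∫ q : Z × X, dist (f₀ q.1) (f q.1) ∂τ := by
      rw [← integral_add hint1 hint2]
      exact integral_mono hintm (hint1.add hint2) fun q => dist_triangle _ _ _
    have hterm1 : ∫ q : Z × X, dist q.2 (f₀ q.1) ∂τ = ∫ q, dist q.1 q.2 ∂π := by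
      have e1 : ∫ q : Z × X, dist q.2 (f₀ q.1) ∂τ = ∫ y : X × X, dist y.2 y.1 ∂σ := by
        rw [← hmap, integral_map hbig.aemeasurable]
        exact (measurable_snd.dist measurable_fst).aestronglyMeasurable
      rw [e1, hσ, integral_map measurable_swap.aemeasurable
        ((measurable_snd.dist measurable_fst).aestronglyMeasurable)]
      rfl
    have hterm2 : ∫ q : Z × X, dist (f₀ q.1) (f q.1) ∂τ = C := by
      have e1 : τ.map Prod.fst = p := by
        have : τ.map Prod.fst = τ.fst := rfl
        rw [this, hτ, Measure.fst_compProd]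
      rw [hCdef, ← e1, integral_map measurable_fst.aemeasurable
        ((hf₀.dist hf).aestronglyMeasurable)]
    have hmem : ∫ q, dist q.1 q.2 ∂ρ ∈ {c | ∃ π : Measure (X × X),
        π.map Prod.fst = μ ∧ π.map Prod.snd = p.map f ∧ c = ∫ q, dist q.1 q.2 ∂π} :=
      ⟨ρ, hρ1, hρ2, rfl⟩
    calc W1 μ (p.map f) ≤ ∫ q, dist q.1 q.2 ∂ρ := csInf_le hbdd hmem
      _ = ∫ q : Z × X, dist q.2 (f q.1) ∂τ := hcost1
      _ ≤ (∫ q : Z × X, dist q.2 (f₀ q.1) ∂τ) + ∫ q : Z × X, dist (f₀ q.1) (f q.1) ∂τ := hcost2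
      _ = (∫ q, dist q.1 q.2 ∂π) + C := by rw [hterm1, hterm2]
  have : W1 μ (p.map f) - C ≤ W1 μ (p.map f₀) := by
    apply le_csInf hS₀ne
    intro c hc
    linarith [key c hc]
  linarith

end Aux

theorem wasserstein_continuous_in_parameter
    {d : ℕ} {X : Type*} [MetricSpace X] [CompactSpace X] [MeasurableSpace X] [BorelSpace X]
    {Z : Type*} [MeasurableSpace Z]
    (μ : Measure X) [IsProbabilityMeasure μ]
    (p : Measure Z) [IsProbabilityMeasure p]
    (g : EuclideanSpace ℝ (Fin d) → Z → X)
    (hgcont : ∀ z, Continuous (fun θ => g θ z))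
    (hgmeas : ∀ θ, Measurable (g θ)) :
    Continuous (fun θ => W1 μ (p.map (g θ))) := by
  obtain ⟨D, hD⟩ : ∃ D, ∀ x y : X, dist x y ≤ D := by
    obtain ⟨C, hC⟩ := Metric.isBounded_iff.mp (isCompact_univ (X := X)).isBounded
    exact ⟨C, fun x y => hC (Set.mem_univ x) (Set.mem_univ y)⟩
  rw [continuous_iff_continuousAt]
  intro θ₀
  have key : ∀ θ, |W1 μ (p.map (g θ)) - W1 μ (p.map (g θ₀))| ≤
      ∫ z, dist (g θ₀ z) (g θ z) ∂p := by
    intro θ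
    have h1 := W1_le_of_pushforward μ p (g θ₀) (g θ) (hgmeas θ₀) (hgmeas θ)
    have h2 := W1_le_of_pushforward μ p (g θ) (g θ₀) (hgmeas θ) (hgmeas θ₀)
    have h3 : ∫ z, dist (g θ z) (g θ₀ z) ∂p = ∫ z, dist (g θ₀ z) (g θ z) ∂p := by
      simp_rw [dist_comm]
    rw [abs_sub_le_iff]
    constructor <;> linarith
  have hC : Tendsto (fun θ => ∫ z, dist (g θ₀ z) (g θ z) ∂p) (nhds θ₀) (nhds 0) := by
    have h := MeasureTheory.tendsto_integral_filter_of_dominated_convergence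
      (μ := p) (l := nhds θ₀) (F := fun θ z => dist (g θ₀ z) (g θ z)) (f := fun _ => (0 : ℝ))
      (bound := fun _ => D)
      (Eventually.of_forall fun θ =>
        ((hgmeas θ₀).dist (hgmeas θ)).aestronglyMeasurable)
      (Eventually.of_forall fun θ => Filter.Eventually.of_forall fun z => by
        rw [Real.norm_eq_abs, abs_of_nonneg dist_nonneg]; exact hD _ _)
      (integrable_const D)
      (Filter.Eventually.of_forall fun z => by
        have hc : Continuous (fun θ => dist (g θ₀ z) (g θ z)) :=
          continuous_const.dist (hgcont z)
        have := hc.tendsto θ₀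
        simpa using this)
    simpa using h
  rw [ContinuousAt, tendsto_iff_dist_tendsto_zero]
  apply squeeze_zero (fun θ => dist_nonneg)
    (fun θ => by rw [Real.dist_eq]; exact key θ) hC
end

section
/- Let X be a compact metric space, F the set of 1-Lipschitz functions on X, and V : F × ℝ^d → ℝ given by V(f, θ) = ∫ f dμ − ∫ f d(g_θ)_# p where g_θ(z) is jointly continuous in (θ, z) and p is a probability measure on a compact space Z. Then W(θ) := sup_{f ∈ F} V(f, θ) is continuous in θ. -/
open MeasureTheory

lemma cont_integrable_aux {X : Type*} [MetricSpace X] [CompactSpace X] [MeasurableSpace X]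
    [BorelSpace X] (μ : Measure X) [IsFiniteMeasure μ] {f : X → ℝ} (hf : Continuous f) :
    Integrable f μ :=
  integrableOn_univ.mp (hf.locallyIntegrable.integrableOn_isCompact isCompact_univ)

theorem envelope_continuity
    {d : ℕ} {X : Type*} [MetricSpace X] [CompactSpace X] [MeasurableSpace X] [BorelSpace X]
    {Z : Type*} [MetricSpace Z] [CompactSpace Z] [MeasurableSpace Z] [BorelSpace Z]
    (μ : Measure X) [IsProbabilityMeasure μ]
    (p : Measure Z) [IsProbabilityMeasure p]
    (g : EuclideanSpace ℝ (Fin d) → Z → X)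
    (hg : Continuous (fun q : EuclideanSpace ℝ (Fin d) × Z => g q.1 q.2)) :
    Continuous (fun θ : EuclideanSpace ℝ (Fin d) =>
      sSup {r | ∃ f : X → ℝ, LipschitzWith 1 f ∧
        r = ∫ x, f x ∂μ - ∫ z, f (g θ z) ∂p}) := by
  have hXne : Nonempty X := MeasureTheory.Measure.nonempty_of_neZero μ
  obtain ⟨x0⟩ := hXne
  set C := Metric.diam (Set.univ : Set X) with hCdef
  have hdiam : ∀ x y : X, dist x y ≤ C := fun x y =>
    Metric.dist_le_diam_of_mem isCompact_univ.isBounded (Set.mem_univ x) (Set.mem_univ y)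
  -- continuity of g θ · for each θ
  have hgθ : ∀ θ, Continuous fun z => g θ z := fun θ =>
    hg.comp (Continuous.prodMk_right θ)
  -- integrability facts
  have hint1 : ∀ (f : X → ℝ), LipschitzWith 1 f → Integrable f μ := fun f hf =>
    cont_integrable_aux μ hf.continuous
  have hint2 : ∀ θ (f : X → ℝ), LipschitzWith 1 f → Integrable (fun z => f (g θ z)) p :=
    fun θ f hf => cont_integrable_aux p (hf.continuous.comp (hgθ θ))
  -- pointwise Lipschitz bound
  have hlip : ∀ (f : X → ℝ), LipschitzWith 1 f → ∀ x y : X, f x - f y ≤ dist x y := by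
    intro f hf x y
    have := hf.dist_le_mul x y
    rw [NNReal.coe_one, one_mul] at this
    calc f x - f y ≤ |f x - f y| := le_abs_self _
      _ = dist (f x) (f y) := (Real.dist_eq _ _).symm
      _ ≤ dist x y := this
  -- nonempty
  have hne : ∀ θ, ({r | ∃ f : X → ℝ, LipschitzWith 1 f ∧
      r = ∫ x, f x ∂μ - ∫ z, f (g θ z) ∂p} : Set ℝ).Nonempty := by
    intro θ
    exact ⟨0, fun _ => 0, (LipschitzWith.const 0).weaken zero_le_one, by simp⟩
  -- bounded above
  have hbdd : ∀ θ, BddAbove {r | ∃ f : X → ℝ, LipschitzWith 1 f ∧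
      r = ∫ x, f x ∂μ - ∫ z, f (g θ z) ∂p} := by
    intro θ
    refine ⟨2 * C, fun r hr => ?_⟩
    obtain ⟨f, hf, rfl⟩ := hr
    have h1 : ∫ x, f x ∂μ ≤ f x0 + C := by
      calc ∫ x, f x ∂μ ≤ ∫ _, (f x0 + C) ∂μ := by
            refine integral_mono (hint1 f hf) (integrable_const _) fun x => ?_
            have := hlip f hf x x0
            have := hdiam x x0
            linarith
        _ = f x0 + C := by simp
    have h2 : f x0 - C ≤ ∫ z, f (g θ z) ∂p := by
      calc f x0 - C = ∫ _, (f x0 - C) ∂p := by simp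
        _ ≤ ∫ z, f (g θ z) ∂p := by
            refine integral_mono (integrable_const _) (hint2 θ f hf) fun z => ?_
            have := hlip f hf x0 (g θ z)
            have := hdiam x0 (g θ z)
            linarith
    linarith
  -- key comparison
  have key : ∀ θ θ' (ε : ℝ), (∀ z, dist (g θ z) (g θ' z) ≤ ε) →
      sSup {r | ∃ f : X → ℝ, LipschitzWith 1 f ∧ r = ∫ x, f x ∂μ - ∫ z, f (g θ z) ∂p} ≤
      sSup {r | ∃ f : X → ℝ, LipschitzWith 1 f ∧ r = ∫ x, f x ∂μ - ∫ z, f (g θ' z) ∂p} + ε := by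
    intro θ θ' ε hz
    refine csSup_le (hne θ) ?_
    rintro r ⟨f, hf, rfl⟩
    have hdiff : ∫ z, f (g θ' z) ∂p - ∫ z, f (g θ z) ∂p ≤ ε := by
      rw [← integral_sub (hint2 θ' f hf) (hint2 θ f hf)]
      calc ∫ z, (f (g θ' z) - f (g θ z)) ∂p ≤ ∫ _, ε ∂p := by
            refine integral_mono ((hint2 θ' f hf).sub (hint2 θ f hf)) (integrable_const _)
              fun z => ?_
            have h1 := hlip f hf (g θ' z) (g θ z)
            have h2 := hz z
            rw [dist_comm] at h1
            linarith
        _ = ε := by simp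
    have hmem : (∫ x, f x ∂μ - ∫ z, f (g θ' z) ∂p) ∈
        {r | ∃ f : X → ℝ, LipschitzWith 1 f ∧ r = ∫ x, f x ∂μ - ∫ z, f (g θ' z) ∂p} :=
      ⟨f, hf, rfl⟩
    have := le_csSup (hbdd θ') hmem
    linarith
  -- continuity via ε-δ
  rw [Metric.continuous_iff]
  intro θ0 ε hε
  have hcs : IsCompact ((Metric.closedBall θ0 1) ×ˢ (Set.univ : Set Z)) :=
    (isCompact_closedBall θ0 1).prod isCompact_univ
  have hu := hcs.uniformContinuousOn_of_continuous hg.continuousOn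
  rw [Metric.uniformContinuousOn_iff] at hu
  obtain ⟨δ, hδ, H⟩ := hu (ε / 2) (by positivity)
  refine ⟨min δ 1, by positivity, fun θ hθ => ?_⟩
  have hθδ : dist θ θ0 < δ := lt_of_lt_of_le hθ (min_le_left _ _)
  have hθ1 : dist θ θ0 ≤ 1 := le_of_lt (lt_of_lt_of_le hθ (min_le_right _ _))
  have hzd : ∀ z, dist (g θ z) (g θ0 z) ≤ ε / 2 := by
    intro z
    refine le_of_lt (H (θ, z) ⟨Metric.mem_closedBall.mpr hθ1, Set.mem_univ _⟩
      (θ0, z) ⟨Metric.mem_closedBall_self zero_le_one, Set.mem_univ _⟩ ?_)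
    simp only [Prod.dist_eq, dist_self]
    exact max_lt hθδ hδ
  have h1 := key θ θ0 (ε / 2) hzd
  have h2 := key θ0 θ (ε / 2) (fun z => by rw [dist_comm]; exact hzd z)
  rw [Real.dist_eq]
  have : |sSup {r | ∃ f : X → ℝ, LipschitzWith 1 f ∧ r = ∫ x, f x ∂μ - ∫ z, f (g θ z) ∂p} -
      sSup {r | ∃ f : X → ℝ, LipschitzWith 1 f ∧ r = ∫ x, f x ∂μ - ∫ z, f (g θ0 z) ∂p}| ≤
      ε / 2 := by
    rw [abs_sub_le_iff]
    constructor <;> linarith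
  linarith [half_lt_self hε]
end
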